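/- Let K : ℝ⁴↑ → ℝ satisfy the reverse triangle inequality, and define the path length L as the infimum over partitions of telescoping K-sums. If π : [s,r] → ℝ and η : [r,t] → ℝ are continuous with π(r) = η(r), and η⊕π : [s,t] → ℝ denotes their concatenation, then L(η⊕π) = L(π) + L(η). -/

import Mathlib

/-!
Gluing partitions of `[s, r]` and `[r, t]` at `r` gives a partition of `[s, t]` whose `K`-sum
along `η ⊕ π` is the sum of the two `K`-sums, so `L(η ⊕ π) ≤ L(π) + L(η)`. Conversely, by the
reverse triangle inequality, inserting `r` into a partition of `[s, t]` can only decrease its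
`K`-sum, and the refined partition splits at `r` into partitions of `[s, r]` and `[r, t]`.
-/

open scoped BigOperators

/-- The length of a continuous path `π : [s,t] → ℝ` with respect to a kernel `K` on
`ℝ⁴↑`: the infimum over finite partitions `s = τ 0 < τ 1 < … < τ k = t` of the
telescoping sums of `K` between consecutive points on the graph of `π`. -/
noncomputable def pathLen (K : ℝ × ℝ → ℝ × ℝ → ℝ) (s t : ℝ) (π : ℝ → ℝ) : EReal :=
  sInf {L : EReal | ∃ k : ℕ, ∃ τ : ℕ → ℝ, 0 < k ∧ τ 0 = s ∧ τ k = t ∧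
    StrictMonoOn τ (Set.Iic k) ∧
    L = ((∑ i ∈ Finset.range k, K (π (τ i), τ i) (π (τ (i + 1)), τ (i + 1)) : ℝ) : EReal)}

open Set

section Partition

variable {α : Type*}

structure IsPartition [Preorder α] (s t : α) (k : ℕ) (τ : ℕ → α) : Prop where
  pos : 0 < k
  zero : τ 0 = s
  last : τ k = t
  strictMonoOn : StrictMonoOn τ (Iic k)

def appendSeq (k₁ : ℕ) (τ₁ τ₂ : ℕ → α) (i : ℕ) : α :=
  if i ≤ k₁ then τ₁ i else τ₂ (i - k₁)

theorem appendSeq_of_le {τ₁ τ₂ : ℕ → α} {k₁ i : ℕ} (hi : i ≤ k₁) :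
    appendSeq k₁ τ₁ τ₂ i = τ₁ i :=
  if_pos hi

theorem appendSeq_add {τ₁ τ₂ : ℕ → α} {k₁ : ℕ} (h : τ₁ k₁ = τ₂ 0) (j : ℕ) :
    appendSeq k₁ τ₁ τ₂ (k₁ + j) = τ₂ j := by
  rcases j.eq_zero_or_pos with rfl | hj
  · simpa [appendSeq] using h
  · simp [appendSeq, hj.ne']

section Preorder

variable [Preorder α] {s t r : α} {k m n i : ℕ} {τ τ₁ τ₂ : ℕ → α}

theorem isPartition_of_lt_succ (hk : 0 < k) (h0 : τ 0 = s) (hk' : τ k = t)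
    (hstep : ∀ i < k, τ i < τ (i + 1)) : IsPartition s t k τ :=
  ⟨hk, h0, hk', strictMonoOn_Iic_of_lt_succ hstep⟩

namespace IsPartition

theorem lt_succ (h : IsPartition s t k τ) (hi : i < k) : τ i < τ (i + 1) :=
  h.strictMonoOn (mem_Iic.2 hi.le) (mem_Iic.2 hi) i.lt_succ_self

theorem mem_Icc (h : IsPartition s t k τ) (hi : i ≤ k) : τ i ∈ Icc s t :=
  ⟨h.zero ▸ h.strictMonoOn.monotoneOn (mem_Iic.2 k.zero_le) (mem_Iic.2 hi) i.zero_le,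
    h.last ▸ h.strictMonoOn.monotoneOn (mem_Iic.2 hi) (mem_Iic.2 le_rfl) hi⟩

theorem take (h : IsPartition s t (m + n) τ) (hm : 0 < m) : IsPartition s (τ m) m τ :=
  isPartition_of_lt_succ hm h.zero rfl fun _ hi => h.lt_succ (by omega)

theorem drop (h : IsPartition s t (m + n) τ) (hn : 0 < n) :
    IsPartition (τ m) t n (fun j => τ (m + j)) :=
  isPartition_of_lt_succ hn rfl h.last fun _ hi => h.lt_succ (by omega)

theorem take_snoc (h : IsPartition s t k τ) (hmk : m < k) (hr : τ m < r) :
    IsPartition s r (m + 1) (fun i => if i ≤ m then τ i else r) := by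
  refine isPartition_of_lt_succ m.succ_pos (by simp [h.zero]) (by simp) fun i hi => ?_
  rcases (Nat.lt_succ_iff.1 hi).lt_or_eq with hi | rfl
  · simpa [hi.le, Nat.succ_le_of_lt hi] using h.lt_succ (by omega)
  · simpa using hr

theorem cons_drop (h : IsPartition s t (m + 1 + n) τ) (hr : r < τ (m + 1)) :
    IsPartition r t (1 + n) (fun j => if j = 0 then r else τ (m + j)) := by
  refine isPartition_of_lt_succ (by omega) rfl ?_ fun j hj => ?_
  · rw [if_neg (by omega), ← add_assoc]
    exact h.last
  · rcases j.eq_zero_or_pos with rfl | hj₀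
    · simpa using hr
    · simp only [if_neg hj₀.ne', if_neg j.succ_ne_zero]
      exact h.lt_succ (by omega)

end IsPartition

theorem isPartition_segment (h : s < t) : IsPartition s t 1 (fun i => if i = 0 then s else t) :=
  isPartition_of_lt_succ one_pos rfl rfl fun i hi => by simpa [Nat.lt_one_iff.1 hi] using h

theorem IsPartition.append {k₁ k₂ : ℕ} (h₁ : IsPartition s r k₁ τ₁) (h₂ : IsPartition r t k₂ τ₂) :
    IsPartition s t (k₁ + k₂) (appendSeq k₁ τ₁ τ₂) := by
  have hjoin : τ₁ k₁ = τ₂ 0 := h₁.last.trans h₂.zero.symm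
  refine isPartition_of_lt_succ (by have := h₁.pos; omega)
    ((appendSeq_of_le k₁.zero_le).trans h₁.zero) ((appendSeq_add hjoin k₂).trans h₂.last)
    fun i hi => ?_
  rcases lt_or_ge i k₁ with hi₁ | hi₁
  · rw [appendSeq_of_le hi₁.le, appendSeq_of_le hi₁]
    exact h₁.lt_succ hi₁
  · obtain ⟨j, rfl⟩ := Nat.exists_eq_add_of_le hi₁
    rw [appendSeq_add hjoin, add_assoc, appendSeq_add hjoin]
    exact h₂.lt_succ (by omega)

end Preorder

theorem IsPartition.exists_lt_le [LinearOrder α] {s t r : α} {k : ℕ} {τ : ℕ → α}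
    (h : IsPartition s t k τ) (hsr : s < r) (hrt : r ≤ t) :
    ∃ m < k, τ m < r ∧ r ≤ τ (m + 1) := by
  classical
  have hex : ∃ j, r ≤ τ j := ⟨k, h.last ▸ hrt⟩
  obtain ⟨m, hm⟩ : ∃ m, Nat.find hex = m + 1 :=
    Nat.exists_eq_succ_of_ne_zero fun h0 => (h.zero ▸ hsr).not_ge (h0 ▸ Nat.find_spec hex)
  have hle : Nat.find hex ≤ k := Nat.find_min' hex (h.last ▸ hrt)
  exact ⟨m, by omega, not_le.1 (Nat.find_min hex (by omega)), hm ▸ Nat.find_spec hex⟩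

end Partition

section PartitionSum

variable (K : ℝ × ℝ → ℝ × ℝ → ℝ)

def ReverseTriangle : Prop :=
  ∀ x s u r y t : ℝ, s ≤ r → r ≤ t → K (x, s) (y, t) ≥ K (x, s) (u, r) + K (u, r) (y, t)

def partitionSum (f : ℝ → ℝ) (k : ℕ) (τ : ℕ → ℝ) : ℝ :=
  ∑ i ∈ Finset.range k, K (f (τ i), τ i) (f (τ (i + 1)), τ (i + 1))

variable {K} {f g : ℝ → ℝ} {k : ℕ} {τ τ' : ℕ → ℝ}

theorem partitionSum_congr (hτ : ∀ i ≤ k, τ i = τ' i) (hf : ∀ i ≤ k, f (τ i) = g (τ i)) :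
    partitionSum K f k τ = partitionSum K g k τ' :=
  Finset.sum_congr rfl fun i hi => by
    rw [Finset.mem_range] at hi
    rw [hf i hi.le, hf (i + 1) hi, hτ i hi.le, hτ (i + 1) hi]

theorem partitionSum_add (f : ℝ → ℝ) (m n : ℕ) (τ : ℕ → ℝ) :
    partitionSum K f (m + n) τ = partitionSum K f m τ + partitionSum K f n (fun j => τ (m + j)) :=
  Finset.sum_range_add _ _ _

theorem partitionSum_append {k₁ k₂ : ℕ} {τ₁ τ₂ : ℕ → ℝ} (h : τ₁ k₁ = τ₂ 0) :
    partitionSum K f (k₁ + k₂) (appendSeq k₁ τ₁ τ₂) =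
      partitionSum K f k₁ τ₁ + partitionSum K f k₂ τ₂ := by
  rw [partitionSum_add]
  congr 1
  · exact partitionSum_congr (fun _ hi => appendSeq_of_le hi) fun _ _ => rfl
  · exact congrArg _ (funext (appendSeq_add h))

theorem IsPartition.exists_split_partitionSum_le (hK : ReverseTriangle K) {s r t : ℝ}
    (h : IsPartition s t k τ) (hsr : s < r) (hrt : r < t) (f : ℝ → ℝ) :
    ∃ k₁ τ₁ k₂ τ₂, IsPartition s r k₁ τ₁ ∧ IsPartition r t k₂ τ₂ ∧
      partitionSum K f k₁ τ₁ + partitionSum K f k₂ τ₂ ≤ partitionSum K f k τ := by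
  obtain ⟨m, hmk, hm, hm'⟩ := h.exists_lt_le hsr hrt.le
  obtain ⟨n, rfl⟩ : ∃ n, k = m + 1 + n := ⟨k - (m + 1), by omega⟩
  rcases hm'.eq_or_lt with rfl | hr
  · have hn : 0 < n := Nat.pos_of_ne_zero <| by
      rintro rfl
      exact hrt.ne h.last
    exact ⟨_, _, _, _, h.take m.succ_pos, h.drop hn, (partitionSum_add f _ _ τ).ge⟩
  -- `r` falls strictly between `τ m` and `τ (m + 1)`: insert it there.
  have hsum₁ : partitionSum K f (m + 1) (fun i => if i ≤ m then τ i else r) =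
      partitionSum K f m τ + K (f (τ m), τ m) (f r, r) := by
    rw [partitionSum, Finset.sum_range_succ]
    congr 1
    · exact partitionSum_congr (fun i hi => if_pos hi) fun _ _ => rfl
    · simp
  have hsum₂ : partitionSum K f (1 + n) (fun j => if j = 0 then r else τ (m + j)) =
      K (f r, r) (f (τ (m + 1)), τ (m + 1)) + partitionSum K f n (fun j => τ (m + 1 + j)) := by
    rw [partitionSum_add]
    congr 1
    · simp [partitionSum]
    · exact partitionSum_congr (fun j _ => by rw [if_neg (by omega), ← add_assoc]) fun _ _ => rfl
  have hsum : partitionSum K f (m + 1 + n) τ = partitionSum K f m τ +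
      K (f (τ m), τ m) (f (τ (m + 1)), τ (m + 1)) + partitionSum K f n (fun j => τ (m + 1 + j)) := by
    rw [partitionSum_add]
    exact congrArg (· + _) (Finset.sum_range_succ _ _)
  refine ⟨_, _, _, _, h.take_snoc hmk hm, h.cons_drop hr, ?_⟩
  have := hK (f (τ m)) (τ m) (f r) r (f (τ (m + 1))) (τ (m + 1)) hm.le hr.le
  rw [hsum₁, hsum₂, hsum]
  linarith

end PartitionSum

section PathLen

variable (K : ℝ × ℝ → ℝ × ℝ → ℝ) {s r t : ℝ} {f π η : ℝ → ℝ} {k : ℕ} {τ : ℕ → ℝ}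

theorem pathLen_le_partitionSum (h : IsPartition s t k τ) :
    pathLen K s t f ≤ partitionSum K f k τ :=
  sInf_le ⟨k, τ, h.pos, h.zero, h.last, h.strictMonoOn, rfl⟩

theorem le_pathLen {c : EReal}
    (h : ∀ k τ, IsPartition s t k τ → c ≤ partitionSum K f k τ) : c ≤ pathLen K s t f :=
  le_sInf fun _ ⟨k, τ, hk, h0, hk', hτ, hc⟩ => hc ▸ h k τ ⟨hk, h0, hk', hτ⟩

theorem exists_partitionSum_lt_of_pathLen_lt {c : EReal} (h : pathLen K s t f < c) :
    ∃ k τ, IsPartition s t k τ ∧ (partitionSum K f k τ : EReal) < c := by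
  obtain ⟨_, ⟨k, τ, hk, h0, hk', hτ, rfl⟩, hc⟩ := sInf_lt_iff.1 h
  exact ⟨k, τ, ⟨hk, h0, hk', hτ⟩, hc⟩

theorem pathLen_ne_top (hst : s < t) : pathLen K s t f ≠ ⊤ :=
  ((pathLen_le_partitionSum K (isPartition_segment hst)).trans_lt (EReal.coe_lt_top _)).ne

noncomputable def pathConcat (r : ℝ) (π η : ℝ → ℝ) (z : ℝ) : ℝ :=
  if z ≤ r then π z else η z

theorem IsPartition.partitionSum_pathConcat_left (h : IsPartition s r k τ) :
    partitionSum K (pathConcat r π η) k τ = partitionSum K π k τ :=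
  partitionSum_congr (fun _ _ => rfl) fun _ hi => if_pos (h.mem_Icc hi).2

theorem IsPartition.partitionSum_pathConcat_right (h : IsPartition r t k τ)
    (hmatch : π r = η r) : partitionSum K (pathConcat r π η) k τ = partitionSum K η k τ := by
  refine partitionSum_congr (fun _ _ => rfl) fun i hi => ?_
  rcases (h.mem_Icc hi).1.eq_or_lt with hr | hr
  · rw [← hr]
    exact (if_pos le_rfl).trans hmatch
  · exact if_neg hr.not_ge

theorem pathLen_pathConcat_le (hsr : s < r) (hrt : r < t) (hmatch : π r = η r) :
    pathLen K s t (pathConcat r π η) ≤ pathLen K s r π + pathLen K r t η := by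
  refine EReal.le_add_of_forall_gt (.inr (pathLen_ne_top K hrt)) (.inl (pathLen_ne_top K hsr))
    fun a ha b hb => ?_
  obtain ⟨k₁, τ₁, h₁, ha⟩ := exists_partitionSum_lt_of_pathLen_lt K ha
  obtain ⟨k₂, τ₂, h₂, hb⟩ := exists_partitionSum_lt_of_pathLen_lt K hb
  calc pathLen K s t (pathConcat r π η)
      ≤ partitionSum K (pathConcat r π η) (k₁ + k₂) (appendSeq k₁ τ₁ τ₂) :=
        pathLen_le_partitionSum K (h₁.append h₂)
    _ = (partitionSum K π k₁ τ₁ : EReal) + partitionSum K η k₂ τ₂ := by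
        rw [partitionSum_append (h₁.last.trans h₂.zero.symm),
          h₁.partitionSum_pathConcat_left, h₂.partitionSum_pathConcat_right K hmatch,
          EReal.coe_add]
    _ ≤ a + b := add_le_add ha.le hb.le

theorem pathLen_add_pathLen_le (hK : ReverseTriangle K) (hsr : s < r) (hrt : r < t)
    (hmatch : π r = η r) :
    pathLen K s r π + pathLen K r t η ≤ pathLen K s t (pathConcat r π η) := by
  refine le_pathLen K fun k τ h => ?_
  obtain ⟨k₁, τ₁, k₂, τ₂, h₁, h₂, hle⟩ :=
    h.exists_split_partitionSum_le hK hsr hrt (pathConcat r π η)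
  calc pathLen K s r π + pathLen K r t η
      ≤ (partitionSum K π k₁ τ₁ : EReal) + partitionSum K η k₂ τ₂ :=
        add_le_add (pathLen_le_partitionSum K h₁) (pathLen_le_partitionSum K h₂)
    _ = ((partitionSum K (pathConcat r π η) k₁ τ₁ +
          partitionSum K (pathConcat r π η) k₂ τ₂ : ℝ) : EReal) := by
        rw [h₁.partitionSum_pathConcat_left, h₂.partitionSum_pathConcat_right K hmatch,
          EReal.coe_add]
    _ ≤ partitionSum K (pathConcat r π η) k τ := EReal.coe_le_coe_iff.2 hle

end PathLen

theorem pathLen_concat_general (K : ℝ × ℝ → ℝ × ℝ → ℝ)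
    (hK : ∀ x s u r y t : ℝ, s ≤ r → r ≤ t →
      K (x, s) (y, t) ≥ K (x, s) (u, r) + K (u, r) (y, t))
    (s r t : ℝ) (hsr : s < r) (hrt : r < t)
    (π η : ℝ → ℝ)
    (hmatch : π r = η r) :
    pathLen K s t (fun z => if z ≤ r then π z else η z) =
      pathLen K s r π + pathLen K r t η :=
  le_antisymm (pathLen_pathConcat_le K hsr hrt hmatch)
    (pathLen_add_pathLen_le K hK hsr hrt hmatch)

theorem pathLen_concat (K : ℝ × ℝ → ℝ × ℝ → ℝ)
    (hK : ∀ x s u r y t : ℝ, s ≤ r → r ≤ t →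
      K (x, s) (y, t) ≥ K (x, s) (u, r) + K (u, r) (y, t))
    (s r t : ℝ) (hsr : s < r) (hrt : r < t)
    (π η : ℝ → ℝ)
    (hπ : ContinuousOn π (Set.Icc s r)) (hη : ContinuousOn η (Set.Icc r t))
    (hmatch : π r = η r) :
    pathLen K s t (fun z => if z ≤ r then π z else η z) =
      pathLen K s r π + pathLen K r t η :=
  pathLen_concat_general K hK s r t hsr hrt π η hmatch
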